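/- Three closed disks of common radius ρ < (√3/2)·R cannot cover a closed disk of radius R in the plane; equivalently, the minimum radius for which three equal disks can cover a disk of radius R is (√3/2)·R. -/

import Mathlib

open Metric Real

open Function Filter Topology Set

open scoped RealInnerProductSpace

/-!
Lower bound: if three disks of radius `ρ < √3 R / 2` covered the disk, colour each point of the
circle of radius `R` by a disk containing it. For `β = 2πN/(3N+1)` with `N` large, points at
angular distance `β` or `2β` are more than `2ρ` apart, so `t, t + β, t + 2β` always get three
distinct colours. Hence the colouring is `3β`-periodic, and together with `2π`-periodicity it is
periodic with period `N (3β - 2π) = -β`, contradicting that `t` and `t + β` have distinct colours.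

Upper bound: the disks of radius `√3 R / 2` centred at `R/2` times three unit vectors at angles
`2π/3` cover the disk, since every `z` makes an angle at most `π/3` with one of them.
-/

lemma fin_three_eq_of_ne {a b c d : Fin 3} (hab : a ≠ b) (hac : a ≠ c) (hbc : b ≠ c)
    (hdb : d ≠ b) (hdc : d ≠ c) : a = d := by
  simp only [ne_eq, Fin.ext_iff] at *
  omega

theorem Function.Periodic.exists_eq_add_or_eq_add_two_mul {g : ℝ → Fin 3} {T : ℝ}
    (hg : Periodic g T) (N : ℕ) :
    ∃ t, g t = g (t + N * T / (3 * N + 1)) ∨ g t = g (t + 2 * (N * T / (3 * N + 1))) := by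
  generalize hβ : (N : ℝ) * T / (3 * N + 1) = β
  by_contra! h
  have h3β : Periodic g (3 * β) := fun t => by
    refine (fin_three_eq_of_ne (h t).1 (h t).2 ?_ ?_ ?_).symm
    · rw [show t + 2 * β = t + β + β by ring]
      exact (h _).1
    · rw [show t + 3 * β = t + β + 2 * β by ring]
      exact (h _).2.symm
    · rw [show t + 3 * β = t + 2 * β + β by ring]
      exact (h _).1.symm
  have hnegβ : Periodic g (-β) := by
    have hperiod := (h3β.sub_period hg).nat_mul N
    rwa [show (N : ℝ) * (3 * β - T) = -β by rw [← hβ]; field_simp; ring] at hperiod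
  exact (h 0).1 (by simpa using hnegβ β)

theorem Function.Periodic.exists_mem_add_of_range_subset_iUnion {X : Type*} {P : ℝ → X} {T : ℝ}
    (hP : Periodic P T) {s : Fin 3 → Set X} (hs : range P ⊆ ⋃ i, s i) (N : ℕ) :
    ∃ i t, P t ∈ s i ∧
      (P (t + N * T / (3 * N + 1)) ∈ s i ∨ P (t + 2 * (N * T / (3 * N + 1))) ∈ s i) := by
  choose f hf using fun x : range P => mem_iUnion.1 (hs x.2)
  have hg : Periodic (fun t => f ⟨P t, mem_range_self t⟩) T :=
    fun t => congrArg f (Subtype.ext (hP t))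
  obtain ⟨t, ht⟩ := hg.exists_eq_add_or_eq_add_two_mul N
  refine ⟨_, t, hf ⟨P t, mem_range_self t⟩, ?_⟩
  rcases ht with ht | ht
  · exact Or.inl (by rw [ht]; exact hf ⟨_, mem_range_self _⟩)
  · exact Or.inr (by rw [ht]; exact hf ⟨_, mem_range_self _⟩)

theorem dist_circleMap_add (c : ℂ) (R t s : ℝ) :
    dist (circleMap c R t) (circleMap c R (t + s)) = |R| * |2 * Real.sin (s / 2)| := by
  have hsub : circleMap c R (t + s) - circleMap c R t =
      circleMap 0 R t * (Complex.exp (Complex.I * s) - 1) := by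
    simp only [circleMap, zero_add]
    push_cast
    rw [add_mul, Complex.exp_add, mul_comm (s : ℂ)]
    ring
  rw [dist_comm, dist_eq_norm, hsub, norm_mul, norm_circleMap_zero,
    Complex.norm_exp_I_mul_ofReal_sub_one, Real.norm_eq_abs]

theorem tendsto_natCast_mul_div_three_mul_add_one (a : ℝ) :
    Tendsto (fun N : ℕ => N * a / (3 * N + 1)) atTop (𝓝 (a / 3)) := by
  have hlim := (tendsto_natCast_div_add_atTop (1 / 3 : ℝ)).const_mul (a / 3)
  rw [mul_one] at hlim
  refine hlim.congr fun N => ?_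
  field_simp

theorem eventually_lt_mul_abs_two_mul_sin {R ρ : ℝ} (hρ : ρ < √3 / 2 * R) {k : ℕ}
    (hk : k = 1 ∨ k = 2) :
    ∀ᶠ N : ℕ in atTop, 2 * ρ < R * |2 * Real.sin (k * (N * (2 * π) / (3 * N + 1)) / 2)| := by
  have hlim := ((by fun_prop : Continuous fun s : ℝ => R * |2 * Real.sin (s / 2)|).tendsto _).comp
    ((tendsto_natCast_mul_div_three_mul_add_one (2 * π)).const_mul (k : ℝ))
  refine hlim.eventually_const_lt ?_
  have hsin : Real.sin (k * (2 * π / 3) / 2) = √3 / 2 := by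
    rcases hk with rfl | rfl
    · rw [← Real.sin_pi_div_three]; congr 1; ring
    · rw [← Real.sin_pi_div_three, ← Real.sin_pi_sub]; congr 1; push_cast; ring
  simp only [hsin]
  rw [abs_of_nonneg (by positivity)]
  linarith

theorem not_closedBall_subset_iUnion_three_closedBall {R ρ : ℝ} (hR : 0 ≤ R)
    (hρ : ρ < √3 / 2 * R) (c : Fin 3 → EuclideanSpace ℝ (Fin 2)) :
    ¬ closedBall 0 R ⊆ ⋃ i, closedBall (c i) ρ := by
  intro hcov
  let chord : ℝ → ℝ := fun s => R * |2 * Real.sin (s / 2)|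
  obtain ⟨N, h1, h2⟩ := ((eventually_lt_mul_abs_two_mul_sin hρ (Or.inl rfl)).and
    (eventually_lt_mul_abs_two_mul_sin hρ (Or.inr rfl))).exists
  let P : ℝ → EuclideanSpace ℝ (Fin 2) :=
    fun t => Complex.orthonormalBasisOneI.repr (circleMap 0 R t)
  have hP : Periodic P (2 * π) := (periodic_circleMap 0 R).comp _
  have hrange : range P ⊆ closedBall 0 R := by
    rintro _ ⟨t, rfl⟩
    simp [P, norm_circleMap_zero, abs_of_nonneg hR]
  have hdist (t s : ℝ) : dist (P t) (P (t + s)) = chord s := by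
    simp only [P, LinearIsometryEquiv.dist_map, dist_circleMap_add, chord, abs_of_nonneg hR]
  obtain ⟨i, t, ht, hnext⟩ := hP.exists_mem_add_of_range_subset_iUnion (hrange.trans hcov) N
  rw [mem_closedBall] at ht
  have hchord_le (s : ℝ) (hs : P (t + s) ∈ closedBall (c i) ρ) : chord s ≤ 2 * ρ := by
    rw [← hdist t s, two_mul]
    exact (dist_triangle_right _ _ _).trans (add_le_add ht hs)
  rcases hnext with hβ | h2β
  · exact (hchord_le _ hβ).not_gt (by simpa [chord] using h1)
  · exact (hchord_le _ h2β).not_gt (by simpa [chord] using h2)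

theorem norm_sub_half_smul_le {E : Type*} [NormedAddCommGroup E] [InnerProductSpace ℝ E]
    {z u : E} {R : ℝ} (hu : ‖u‖ = 1) (hz : ‖z‖ ≤ R) (hzu : ‖z‖ ≤ 2 * ⟪z, u⟫) :
    ‖z - (R / 2) • u‖ ≤ √3 / 2 * R := by
  have hR : 0 ≤ R := (norm_nonneg z).trans hz
  have hsq : ‖z - (R / 2) • u‖ ^ 2 ≤ (√3 / 2 * R) ^ 2 := by
    have h3 : (√3 / 2 * R) ^ 2 = 3 / 4 * R ^ 2 := by
      rw [mul_pow, div_pow, Real.sq_sqrt (by norm_num)]; ring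
    rw [norm_sub_sq_real, norm_smul, inner_smul_right, hu, Real.norm_eq_abs,
      abs_of_nonneg (by positivity), h3]
    nlinarith [mul_le_mul_of_nonneg_left hzu hR,
      mul_nonneg (sub_nonneg.2 hz) (by positivity : 0 ≤ ‖z‖ + R / 2)]
  exact (pow_le_pow_iff_left₀ (norm_nonneg _) (by positivity) two_ne_zero).1 hsq

noncomputable def tripod : Fin 3 → EuclideanSpace ℝ (Fin 2) :=
  ![!₂[0, 1], !₂[-(√3 / 2), -(1 / 2)], !₂[√3 / 2, -(1 / 2)]]

theorem norm_tripod (k : Fin 3) : ‖tripod k‖ = 1 := by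
  rw [EuclideanSpace.norm_eq, Real.sqrt_eq_one]
  have h3 : √3 ^ 2 = 3 := Real.sq_sqrt (by norm_num)
  fin_cases k <;> simp [tripod, Fin.sum_univ_two] <;> linarith

theorem exists_norm_le_two_mul_inner_tripod (z : EuclideanSpace ℝ (Fin 2)) :
    ∃ k, ‖z‖ ≤ 2 * ⟪z, tripod k⟫ := by
  by_contra! h
  have hz : ‖z‖ ^ 2 = z 0 ^ 2 + z 1 ^ 2 := by
    simp [EuclideanSpace.real_norm_sq_eq, Fin.sum_univ_two]
  have h3 : √3 ^ 2 = 3 := Real.sq_sqrt (by norm_num)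
  have h0 := h 0
  have h1 := h 1
  have h2 := h 2
  simp [tripod, PiLp.inner_apply, Fin.sum_univ_two] at h0 h1 h2
  -- The three inner products sum to `0` and their squares to `3/2 ‖z‖²`.
  nlinarith [norm_nonneg z]

theorem closedBall_subset_iUnion_closedBall_tripod (R : ℝ) :
    closedBall (0 : EuclideanSpace ℝ (Fin 2)) R ⊆
      ⋃ k, closedBall ((R / 2) • tripod k) (√3 / 2 * R) := by
  intro z hz
  rw [mem_closedBall_zero_iff] at hz
  obtain ⟨k, hk⟩ := exists_norm_le_two_mul_inner_tripod z
  exact mem_iUnion.2 ⟨k, mem_closedBall_iff_norm.2 (norm_sub_half_smul_le (norm_tripod k) hz hk)⟩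

theorem three_disk_covering (R : ℝ) (hR : 0 < R) :
    (∀ ρ : ℝ, ρ < Real.sqrt 3 / 2 * R →
      ∀ c : Fin 3 → EuclideanSpace ℝ (Fin 2),
        ¬ (closedBall (0 : EuclideanSpace ℝ (Fin 2)) R ⊆ ⋃ i, closedBall (c i) ρ)) ∧
    (∃ c : Fin 3 → EuclideanSpace ℝ (Fin 2),
      closedBall (0 : EuclideanSpace ℝ (Fin 2)) R ⊆
        ⋃ i, closedBall (c i) (Real.sqrt 3 / 2 * R)) :=
  ⟨fun _ hρ c => not_closedBall_subset_iUnion_three_closedBall hR.le hρ c,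
    ⟨fun k => (R / 2) • tripod k, closedBall_subset_iUnion_closedBall_tripod R⟩⟩
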